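/- Let d ≥ 1 and n ≥ 1 be integers and K > 0. Let c : ℝᵈ → ℝᵈ be n times continuously differentiable with all partial derivatives up to order n (including c itself) bounded in absolute value by K, and suppose that |det(𝕀 + θ·Dc(x))| ≥ K⁻¹ for all x ∈ ℝᵈ and θ ∈ [0,1]. Then for every θ ∈ [0,1] the map T_θ(x) := x + θ·c(x) is a bijection of ℝᵈ onto itself whose inverse map is n times continuously differentiable, i.e. T_θ is a Cⁿ-diffeomorphism of ℝᵈ. -/

import Mathlib

open MeasureTheory Finset
open scoped ENNReal

/-- Partial derivative in direction `i`. -/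
noncomputable def pd {d : ℕ} (i : Fin d) (f : EuclideanSpace ℝ (Fin d) → ℝ) :
    EuclideanSpace ℝ (Fin d) → ℝ :=
  fun x => fderiv ℝ f x (EuclideanSpace.single i 1)

/-- Multi-index partial derivative `∂^ζ`. -/
noncomputable def mpd {d : ℕ} (ζ : Fin d → ℕ) (f : EuclideanSpace ℝ (Fin d) → ℝ) :
    EuclideanSpace ℝ (Fin d) → ℝ :=
  (List.finRange d).foldr (fun i g => (pd i)^[ζ i] g) f

/-- Jacobian matrix of a map `ℝᵈ → ℝᵈ`. -/
noncomputable def jac {d : ℕ} (c : EuclideanSpace ℝ (Fin d) → EuclideanSpace ℝ (Fin d))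
    (x : EuclideanSpace ℝ (Fin d)) : Matrix (Fin d) (Fin d) ℝ :=
  Matrix.of fun i j => fderiv ℝ (fun y => c y i) x (EuclideanSpace.single j 1)

/-- The finite set of multi-indices `ζ ∈ ℕᵈ` with `|ζ| ≤ n`. -/
def midx (d n : ℕ) : Finset (Fin d → ℕ) :=
  (Finset.univ.image (fun f : Fin d → Fin (n + 1) => fun i => (f i : ℕ))).filter
    (fun ζ => ∑ i, ζ i ≤ n)

/-!
Continuity method in `θ`. Write `T_θ = id + θ • c`. The entry bounds on `Dc` and the lower bound
on `det (𝕀 + θ Dc)` bound `‖(DT_θ x)⁻¹‖` by some `M` uniformly in `x` and `θ` (adjugate formula),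
and `c` is `L`-Lipschitz. If `T_s` is bijective, its inverse `g` is `Cⁿ` by the inverse function
theorem and `M`-Lipschitz, so for `0 ≤ t - s < 1 / (M L)` the equation `T_t x = y` is the
contraction fixed-point problem `x = g (y - (t - s) • c x)`. Hence bijectivity spreads from
`T_0 = id` to all of `[0, 1]` in steps of uniform length.
-/

open Function Set
open scoped NNReal Nat

theorem forall_mem_Icc_of_uniform_step {P : ℝ → Prop} {a b δ : ℝ} (hδ : 0 < δ) (ha : P a)
    (hstep : ∀ s ∈ Icc a b, ∀ t ∈ Icc a b, s ≤ t → t ≤ s + δ → P s → P t) :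
    ∀ t ∈ Icc a b, P t := by
  have reach : ∀ m : ℕ, ∀ t ∈ Icc a b, t ≤ a + m * δ → P t := by
    intro m
    induction m with
    | zero =>
      intro t ht hle
      simpa [le_antisymm (by simpa using hle) ht.1] using ha
    | succ m ih =>
      intro t ht hle
      have hs : max a (t - δ) ∈ Icc a b :=
        ⟨le_max_left _ _, max_le (ht.1.trans ht.2) (by linarith [ht.2])⟩
      refine hstep _ hs t ht (max_le ht.1 (by linarith)) (by linarith [le_max_right a (t - δ)])
        (ih _ hs (max_le (by nlinarith [m.cast_nonneg (α := ℝ)]) ?_))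
      push_cast at hle
      linarith
  intro t ht
  obtain ⟨m, hm⟩ := exists_nat_ge ((b - a) / δ)
  exact reach m t ht (by rw [div_le_iff₀ hδ] at hm; linarith [ht.2])

theorem Function.bijective_add_of_lipschitzWith {E F : Type*} [MetricSpace E] [CompleteSpace E]
    [SeminormedAddCommGroup F] {f h : E → F} {g : F → E} {Kg Kh : ℝ≥0}
    (hgf : LeftInverse g f) (hfg : RightInverse g f) (hg : LipschitzWith Kg g)
    (hh : LipschitzWith Kh h) (hK : Kg * Kh < 1) : Bijective fun x => f x + h x := by
  have hcontr : ∀ y, ContractingWith (Kg * Kh) fun x => g (y - h x) := fun y =>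
    ⟨hK, hg.comp <| LipschitzWith.of_dist_le_mul fun a b => by
      rw [dist_sub_left]; exact hh.dist_le_mul a b⟩
  have hfix : ∀ y x, IsFixedPt (fun x => g (y - h x)) x ↔ f x + h x = y := fun y x => by
    rw [IsFixedPt, ← eq_sub_iff_add_eq]
    exact ⟨fun hx => by rw [← hfg (y - h x), hx], fun hx => hx ▸ hgf x⟩
  refine ⟨fun a b hab => ?_, fun y => ?_⟩
  · exact (hcontr _).fixedPoint_unique' ((hfix _ a).2 rfl) ((hfix _ b).2 hab.symm)
  · have : Nonempty E := ⟨g y⟩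
    exact ⟨_, (hfix y _).1 (hcontr y).fixedPoint_isFixedPt⟩

section InverseOfBijective

variable {𝕜 E F : Type*} [RCLike 𝕜] [NormedAddCommGroup E] [NormedSpace 𝕜 E] [CompleteSpace E]
  [NormedAddCommGroup F] [NormedSpace 𝕜 F] {n : WithTop ℕ∞} {f : E → F} {g : F → E}
  {f' : E → E ≃L[𝕜] F}

theorem ContDiff.isHomeomorph_of_bijective (hf : ContDiff 𝕜 n f) (hn : n ≠ 0)
    (hf' : ∀ x, HasFDerivAt f (f' x : E →L[𝕜] F) x) (hbij : Bijective f) : IsHomeomorph f :=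
  ⟨hf.continuous, isOpenMap_of_hasStrictFDerivAt_equiv fun x =>
    hf.contDiffAt.hasStrictFDerivAt' (hf' x) hn, hbij⟩

theorem ContDiff.homeomorph_symm_eq_of_inverse (hf : ContDiff 𝕜 n f) (hn : n ≠ 0)
    (hf' : ∀ x, HasFDerivAt f (f' x : E →L[𝕜] F) x) (hgf : LeftInverse g f)
    (hfg : RightInverse g f) :
    ⇑((hf.isHomeomorph_of_bijective hn hf' ⟨hgf.injective, hfg.surjective⟩).homeomorph f).symm
      = g :=
  funext fun y => hgf.injective.eq_iff.mp (by simp [hfg y, surjInv_eq])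

theorem ContDiff.contDiff_of_inverse (hf : ContDiff 𝕜 n f) (hn : n ≠ 0)
    (hf' : ∀ x, HasFDerivAt f (f' x : E →L[𝕜] F) x) (hgf : LeftInverse g f)
    (hfg : RightInverse g f) : ContDiff 𝕜 n g := by
  rw [← hf.homeomorph_symm_eq_of_inverse hn hf' hgf hfg]
  exact Homeomorph.contDiff_symm _ hf' hf

theorem ContDiff.hasFDerivAt_of_inverse (hf : ContDiff 𝕜 n f) (hn : n ≠ 0)
    (hf' : ∀ x, HasFDerivAt f (f' x : E →L[𝕜] F) x) (hgf : LeftInverse g f)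
    (hfg : RightInverse g f) (y : F) : HasFDerivAt g ((f' (g y)).symm : F →L[𝕜] E) y := by
  have hg := hf.homeomorph_symm_eq_of_inverse hn hf' hgf hfg
  refine (hf' (g y)).of_local_left_inverse ?_ (.of_forall hfg)
  exact hg ▸ Homeomorph.continuous_symm _ |>.continuousAt

theorem ContDiff.lipschitzWith_of_inverse (hf : ContDiff 𝕜 n f) (hn : n ≠ 0)
    (hf' : ∀ x, HasFDerivAt f (f' x : E →L[𝕜] F) x) (hgf : LeftInverse g f)
    (hfg : RightInverse g f) {M : ℝ≥0} (hM : ∀ x, ‖((f' x).symm : F →L[𝕜] E)‖₊ ≤ M) :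
    LipschitzWith M g := by
  have hg' := hf.hasFDerivAt_of_inverse hn hf' hgf hfg
  refine lipschitzWith_of_nnnorm_fderiv_le (fun y => (hg' y).differentiableAt) fun y => ?_
  rw [(hg' y).fderiv]
  exact hM _

end InverseOfBijective

namespace Matrix

theorem abs_one_add_smul_apply_le {n : Type*} [DecidableEq n] {A : Matrix n n ℝ} {K θ : ℝ}
    (hθ : θ ∈ Icc (0 : ℝ) 1) (hA : ∀ i j, |A i j| ≤ K) (i j : n) : |(1 + θ • A) i j| ≤ 1 + K := by
  rw [add_apply, smul_apply, smul_eq_mul]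
  refine (abs_add_le _ _).trans (add_le_add ?_ ?_)
  · rw [one_apply]; split_ifs <;> simp
  · rw [abs_mul, abs_of_nonneg hθ.1]
    nlinarith [hA i j, abs_nonneg (A i j), hθ.2]

variable {n : Type*} [Fintype n] [DecidableEq n]

theorem abs_inv_apply_le (A : Matrix n n ℝ) {B : ℝ} (hB : 1 ≤ B) (hA : ∀ i j, |A i j| ≤ B)
    (i j : n) : |A⁻¹ i j| ≤ |A.det|⁻¹ * ((Fintype.card n)! * B ^ Fintype.card n) := by
  have hadj : |A.adjugate i j| ≤ (Fintype.card n)! * B ^ Fintype.card n := by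
    rw [adjugate_apply]
    refine (det_le (abv := AbsoluteValue.abs) fun k l => ?_).trans_eq (nsmul_eq_mul _ _)
    rw [updateRow_apply]
    split_ifs
    · rcases eq_or_ne l i with rfl | hli
      · simpa using hB
      · simpa [Pi.single_apply, hli] using zero_le_one.trans hB
    · exact hA k l
  rw [inv_def, smul_apply, Ring.inverse_eq_inv', smul_eq_mul, abs_mul, abs_inv]
  exact mul_le_mul_of_nonneg_left hadj (by positivity)

theorem exists_norm_toEuclideanCLM_le :
    ∃ C, 0 ≤ C ∧ ∀ (A : Matrix n n ℝ) (B : ℝ), (∀ i j, |A i j| ≤ B) →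
      ‖toEuclideanCLM (n := n) (𝕜 := ℝ) A‖ ≤ C * B := by
  refine ⟨∑ i, ∑ j, ‖toEuclideanCLM (n := n) (𝕜 := ℝ) (single i j 1)‖, by positivity,
    fun A B hA => ?_⟩
  have hsum : toEuclideanCLM (n := n) (𝕜 := ℝ) A =
      ∑ i, ∑ j, A i j • toEuclideanCLM (n := n) (𝕜 := ℝ) (single i j 1) := by
    simp_rw [← _root_.map_smul, smul_single, smul_eq_mul, mul_one, ← map_sum,
      ← matrix_eq_sum_single]
  rw [hsum]
  simp_rw [Finset.sum_mul]
  refine (norm_sum_le _ _).trans (Finset.sum_le_sum fun i _ => (norm_sum_le _ _).trans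
    (Finset.sum_le_sum fun j _ => ?_))
  rw [norm_smul, Real.norm_eq_abs, mul_comm]
  exact mul_le_mul_of_nonneg_left (hA i j) (norm_nonneg _)

theorem exists_toEuclideanCLM_equiv {𝕜 : Type*} [RCLike 𝕜] (A : Matrix n n 𝕜)
    (hA : IsUnit A.det) : ∃ e : EuclideanSpace 𝕜 n ≃L[𝕜] EuclideanSpace 𝕜 n,
      (e : EuclideanSpace 𝕜 n →L[𝕜] EuclideanSpace 𝕜 n) =
        toEuclideanCLM (n := n) (𝕜 := 𝕜) A ∧
      (e.symm : EuclideanSpace 𝕜 n →L[𝕜] EuclideanSpace 𝕜 n) =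
        toEuclideanCLM (n := n) (𝕜 := 𝕜) A⁻¹ :=
  ⟨ContinuousLinearEquiv.unitsEquiv 𝕜 _ (Units.map (toEuclideanCLM (n := n) (𝕜 := 𝕜) :
    Matrix n n 𝕜 →* _) (nonsingInvUnit A hA)), rfl, rfl⟩

end Matrix

section Jacobian

variable {d : ℕ}

local notation "E" => EuclideanSpace ℝ (Fin d)

theorem mpd_single (j : Fin d) (f : E → ℝ) : mpd (Pi.single j 1 : Fin d → ℕ) f = pd j f := by
  suffices ∀ l : List (Fin d), l.Nodup →
      l.foldr (fun i g => (pd i)^[(Pi.single j 1 : Fin d → ℕ) i] g) f =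
        if j ∈ l then pd j f else f by
    simpa [mpd] using this _ (List.nodup_finRange d)
  intro l hl
  induction l with
  | nil => simp
  | cons a t ih =>
    rw [List.nodup_cons] at hl
    rcases eq_or_ne a j with rfl | haj
    · simp [ih hl.2, hl.1]
    · simp [ih hl.2, Ne.symm haj]

theorem fderiv_eq_toEuclideanCLM_jac {c : E → E} {x : E} (hc : DifferentiableAt ℝ c x) :
    fderiv ℝ c x = Matrix.toEuclideanCLM (n := Fin d) (𝕜 := ℝ) (jac c x) := by
  rw [eq_comm, ← StarAlgEquiv.eq_symm_apply]
  ext i j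
  have hci : HasFDerivAt (fun y => c y i) ((EuclideanSpace.proj i).comp (fderiv ℝ c x)) x :=
    (EuclideanSpace.proj (𝕜 := ℝ) i).hasFDerivAt.comp x hc.hasFDerivAt
  simp [jac, hci.fderiv, Matrix.toEuclideanCLM, LinearMap.toMatrix_apply]

theorem abs_jac_apply_le_of_abs_mpd_le {n : ℕ} (hn : 1 ≤ n) {c : E → E} {K : ℝ}
    (hbd : ∀ ζ : Fin d → ℕ, (∑ i, ζ i) ≤ n →
      ∀ (i : Fin d) (x : E), |mpd ζ (fun y => c y i) x| ≤ K)
    (x : E) (i j : Fin d) : |jac c x i j| ≤ K := by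
  simpa [mpd_single, pd, jac] using hbd (Pi.single j 1) (by simpa using hn) i x

theorem hasFDerivAt_add_smul_jac {c : E → E} {x : E} (hc : DifferentiableAt ℝ c x) (θ : ℝ) :
    HasFDerivAt (fun y => y + θ • c y)
      (Matrix.toEuclideanCLM (n := Fin d) (𝕜 := ℝ) (1 + θ • jac c x)) x := by
  rw [map_add, map_one, _root_.map_smul, ← fderiv_eq_toEuclideanCLM_jac hc]
  exact (hasFDerivAt_id x).add (hc.hasFDerivAt.const_smul θ)

theorem exists_lipschitzWith_of_abs_jac_le {c : E → E} (hc : Differentiable ℝ c) {K : ℝ}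
    (hJ : ∀ x i j, |jac c x i j| ≤ K) : ∃ L, LipschitzWith L c := by
  obtain ⟨C, -, hC⟩ := Matrix.exists_norm_toEuclideanCLM_le (n := Fin d)
  refine ⟨(C * K).toNNReal, lipschitzWith_of_nnnorm_fderiv_le hc fun x => ?_⟩
  rw [← NNReal.coe_le_coe, coe_nnnorm, fderiv_eq_toEuclideanCLM_jac (hc x)]
  exact (hC _ K (hJ x)).trans (Real.le_coe_toNNReal _)

theorem exists_forall_hasFDerivAt_add_smul_equiv {c : E → E} (hc : Differentiable ℝ c) {K : ℝ}
    (hK : 0 < K) (hJ : ∀ x i j, |jac c x i j| ≤ K)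
    (hdet : ∀ x, ∀ θ ∈ Icc (0 : ℝ) 1,
      K⁻¹ ≤ |((1 : Matrix (Fin d) (Fin d) ℝ) + θ • jac c x).det|) :
    ∃ M : ℝ≥0, ∀ θ ∈ Icc (0 : ℝ) 1, ∀ x, ∃ e : E ≃L[ℝ] E,
      HasFDerivAt (fun y => y + θ • c y) (e : E →L[ℝ] E) x ∧ ‖(e.symm : E →L[ℝ] E)‖₊ ≤ M := by
  obtain ⟨C, hC0, hC⟩ := Matrix.exists_norm_toEuclideanCLM_le (n := Fin d)
  refine ⟨(C * (K * (d ! * (1 + K) ^ d))).toNNReal, fun θ hθ x => ?_⟩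
  set A := (1 : Matrix (Fin d) (Fin d) ℝ) + θ • jac c x
  have hA : ∀ i j, |A i j| ≤ 1 + K := Matrix.abs_one_add_smul_apply_le hθ (hJ x)
  have hdetA : K⁻¹ ≤ |A.det| := hdet x θ hθ
  have hunit : IsUnit A.det :=
    isUnit_iff_ne_zero.2 fun h => by rw [h, abs_zero] at hdetA; linarith [inv_pos.2 hK]
  obtain ⟨e, he, he_symm⟩ := A.exists_toEuclideanCLM_equiv hunit
  refine ⟨e, he ▸ hasFDerivAt_add_smul_jac (hc x) θ, ?_⟩
  rw [← NNReal.coe_le_coe, coe_nnnorm, he_symm]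
  refine (hC _ _ (A.abs_inv_apply_le (by linarith) hA)).trans
    (le_trans ?_ (Real.le_coe_toNNReal _))
  rw [Fintype.card_fin]
  gcongr
  exact inv_le_of_inv_le₀ hK hdetA

end Jacobian

theorem bijective_add_smul_of_forall_hasFDerivAt {E : Type*} [NormedAddCommGroup E]
    [NormedSpace ℝ E] [CompleteSpace E] {n : WithTop ℕ∞} {c : E → E} (hc : ContDiff ℝ n c)
    (hn : n ≠ 0) {L M : ℝ≥0} (hcL : LipschitzWith L c)
    (hf' : ∀ θ ∈ Icc (0 : ℝ) 1, ∀ x, ∃ e : E ≃L[ℝ] E,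
      HasFDerivAt (fun y => y + θ • c y) (e : E →L[ℝ] E) x ∧ ‖(e.symm : E →L[ℝ] E)‖₊ ≤ M) :
    ∀ θ ∈ Icc (0 : ℝ) 1, Bijective fun x => x + θ • c x := by
  refine forall_mem_Icc_of_uniform_step (δ := ((M : ℝ) * L + 1)⁻¹) (by positivity)
    (by simp only [zero_smul, add_zero]; exact bijective_id) fun s hs t _ hst hts hbij => ?_
  choose e he using hf' s hs
  have hT : ContDiff ℝ n fun x => x + s • c x := contDiff_id.add (hc.const_smul s)
  have hgf := leftInverse_invFun hbij.1
  have hfg := rightInverse_invFun hbij.2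
  have hg := hT.lipschitzWith_of_inverse hn (fun x => (he x).1) hgf hfg fun x => (he x).2
  have hh : LipschitzWith (‖t - s‖₊ * L) fun x => (t - s) • c x :=
    (lipschitzWith_smul _).comp hcL
  have hcontr : M * (‖t - s‖₊ * L) < 1 := by
    rw [← NNReal.coe_lt_coe]
    push_cast
    rw [Real.norm_of_nonneg (sub_nonneg.2 hst)]
    calc (M : ℝ) * ((t - s) * L) ≤ M * (((M : ℝ) * L + 1)⁻¹ * L) := by gcongr; linarith
      _ = M * L / (M * L + 1) := by field_simp
      _ < 1 := by rw [div_lt_one (by positivity)]; linarith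
  simpa [add_assoc, ← add_smul] using bijective_add_of_lipschitzWith hgf hfg hg hh hcontr

theorem degenerate_SIDE_stmt0_general (d n : ℕ) (hn : 1 ≤ n) (K : ℝ) (hK : 0 < K)
    (c : EuclideanSpace ℝ (Fin d) → EuclideanSpace ℝ (Fin d))
    (hc : ContDiff ℝ (n : ℕ∞) c)
    (hbd : ∀ ζ : Fin d → ℕ, (∑ i, ζ i) ≤ n →
      ∀ (i : Fin d) (x : EuclideanSpace ℝ (Fin d)), |mpd ζ (fun y => c y i) x| ≤ K)
    (hdet : ∀ (x : EuclideanSpace ℝ (Fin d)), ∀ θ ∈ Set.Icc (0 : ℝ) 1,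
      K⁻¹ ≤ |((1 : Matrix (Fin d) (Fin d) ℝ) + θ • jac c x).det|) :
    ∀ θ ∈ Set.Icc (0 : ℝ) 1,
      ∃ J : EuclideanSpace ℝ (Fin d) → EuclideanSpace ℝ (Fin d),
        Function.LeftInverse J (fun x => x + θ • c x) ∧
        Function.RightInverse J (fun x => x + θ • c x) ∧
        ContDiff ℝ (n : ℕ∞) J := by
  intro θ hθ
  have hn0 : ((n : ℕ∞) : WithTop ℕ∞) ≠ 0 := by exact_mod_cast (by omega : n ≠ 0)
  have hdiff : Differentiable ℝ c := hc.differentiable hn0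
  have hJ := abs_jac_apply_le_of_abs_mpd_le hn hbd
  obtain ⟨L, hL⟩ := exists_lipschitzWith_of_abs_jac_le hdiff hJ
  obtain ⟨M, hM⟩ := exists_forall_hasFDerivAt_add_smul_equiv hdiff hK hJ hdet
  have hbij := bijective_add_smul_of_forall_hasFDerivAt hc hn0 hL hM θ hθ
  choose e he using hM θ hθ
  exact ⟨invFun _, leftInverse_invFun hbij.1, rightInverse_invFun hbij.2,
    (contDiff_id.add (hc.const_smul θ)).contDiff_of_inverse hn0 (fun x => (he x).1)
      (leftInverse_invFun hbij.1) (rightInverse_invFun hbij.2)⟩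

/-- If `c : ℝᵈ → ℝᵈ` is `Cⁿ` with all partial derivatives up to order `n` (including `c`
itself) bounded by `K`, and `|det(𝕀 + θ·Dc(x))| ≥ K⁻¹` for all `x` and `θ ∈ [0,1]`, then for
every `θ ∈ [0,1]` the map `T_θ(x) = x + θ·c(x)` is a bijection of `ℝᵈ` with a `Cⁿ` inverse. -/
theorem degenerate_SIDE_stmt0 (d n : ℕ) (hd : 1 ≤ d) (hn : 1 ≤ n) (K : ℝ) (hK : 0 < K)
    (c : EuclideanSpace ℝ (Fin d) → EuclideanSpace ℝ (Fin d))
    (hc : ContDiff ℝ (n : ℕ∞) c)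
    (hbd : ∀ ζ : Fin d → ℕ, (∑ i, ζ i) ≤ n →
      ∀ (i : Fin d) (x : EuclideanSpace ℝ (Fin d)), |mpd ζ (fun y => c y i) x| ≤ K)
    (hdet : ∀ (x : EuclideanSpace ℝ (Fin d)), ∀ θ ∈ Set.Icc (0 : ℝ) 1,
      K⁻¹ ≤ |((1 : Matrix (Fin d) (Fin d) ℝ) + θ • jac c x).det|) :
    ∀ θ ∈ Set.Icc (0 : ℝ) 1,
      ∃ J : EuclideanSpace ℝ (Fin d) → EuclideanSpace ℝ (Fin d),
        Function.LeftInverse J (fun x => x + θ • c x) ∧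
        Function.RightInverse J (fun x => x + θ • c x) ∧
        ContDiff ℝ (n : ℕ∞) J :=
  degenerate_SIDE_stmt0_general d n hn K hK c hc hbd hdet
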